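/- Let U, V̄, W : (−1, 1) → ℝ be differentiable, and for x ∈ (−1, 1) let λ(x) be the symmetric 2×2 matrix with entries λ₁₁ = e^{2U+V̄}cosh W, λ₂₂ = e^{2U−V̄}(1 − x²)cosh W, λ₁₂ = λ₂₁ = e^{2U}·√(1 − x²)·sinh W. Then for every x ∈ (−1, 1): (1 − x²)·[ ((det λ)′)²/(8(det λ)²) + (1/8)·Tr((λ⁻¹λ′)²) ] − 1/(1 − x²) = ((1 − x²)/4)·[ 12(U′)² + (V̄′)² + (W′)² + sinh²W·(V̄′ + x/(1 − x²))² ] + (x/2)·(V̄ − 6U)′ − 1, where ′ denotes d/dx. -/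

import Mathlib

open Real

/-- The fiber metric `λ` of Section 6 (ring parameterization, topology `S¹ × S²`), as a
matrix-valued function of `x` determined by target functions `U, V̄, W`. -/
noncomputable def lamRing (U Vb W : ℝ → ℝ) (x : ℝ) : Matrix (Fin 2) (Fin 2) ℝ :=
  !![Real.exp (2 * U x + Vb x) * Real.cosh (W x),
     Real.exp (2 * U x) * Real.sqrt (1 - x ^ 2) * Real.sinh (W x);
     Real.exp (2 * U x) * Real.sqrt (1 - x ^ 2) * Real.sinh (W x),
     Real.exp (2 * U x - Vb x) * (1 - x ^ 2) * Real.cosh (W x)]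

noncomputable def lamRing' (U Vb W : ℝ → ℝ) (x : ℝ) : Matrix (Fin 2) (Fin 2) ℝ :=
  Matrix.of fun i j => deriv (fun t => lamRing U Vb W t i j) x

/-!
For a 2 × 2 matrix, Cayley–Hamilton gives `Tr (A²) = (Tr A)² - 2 det A`, and Jacobi's formula
gives `Tr (λ⁻¹ λ′) = (det λ)′ / det λ`; so the λ-part of the functional only involves `det λ`
and `det λ′`. Here `det λ = e^{4U} (1 - x²)`, and with `α = 2U′ - x/(1 - x²) = ½ (log det λ)′`
and `β = V̄′ + x/(1 - x²)` the entries of `λ′` factor so that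
`det λ′ = det λ · (α² - β² cosh² W - W′²)`.
What remains is `cosh² = 1 + sinh²` and clearing denominators.
-/

namespace Matrix

theorem trace_sq_fin_two {R : Type*} [CommRing R] (A : Matrix (Fin 2) (Fin 2) R) :
    trace (A ^ 2) = trace A ^ 2 - 2 * det A := by
  simp only [sq, trace_fin_two, det_fin_two, mul_apply, Fin.sum_univ_two]
  ring

theorem trace_inv_mul_sq_fin_two {K : Type*} [Field K] {L : Matrix (Fin 2) (Fin 2) K}
    (hL : det L ≠ 0) (N : Matrix (Fin 2) (Fin 2) K) :
    trace ((L⁻¹ * N) ^ 2) = (trace (adjugate L * N) / det L) ^ 2 - 2 * (det N / det L) := by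
  rw [trace_sq_fin_two, inv_def, Ring.inverse_eq_inv', smul_mul, trace_smul, det_smul, det_mul,
    det_adjugate]
  simp only [Fintype.card_fin, smul_eq_mul]
  field_simp
  ring

theorem hasDerivAt_det_fin_two {𝕜 : Type*} [NontriviallyNormedField 𝕜]
    {L : 𝕜 → Matrix (Fin 2) (Fin 2) 𝕜} {L' : Matrix (Fin 2) (Fin 2) 𝕜} {x : 𝕜}
    (hL : ∀ i j, HasDerivAt (fun t => L t i j) (L' i j) x) :
    HasDerivAt (fun t => (L t).det) (trace (adjugate (L x) * L')) x := by
  simp only [det_fin_two]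
  refine (((hL 0 0).mul (hL 1 1)).sub ((hL 0 1).mul (hL 1 0))).congr_deriv ?_
  simp [adjugate_fin_two, trace_fin_two, vecMul, dotProduct, Fin.sum_univ_two]
  ring

end Matrix

theorem exp_add_mul_exp_sub (a b : ℝ) : exp (a + b) * exp (a - b) = exp a ^ 2 := by
  rw [← exp_add, sq, ← exp_add]
  ring_nf

theorem hasDerivAt_one_sub_sq (x : ℝ) : HasDerivAt (fun t : ℝ => 1 - t ^ 2) (-(2 * x)) x := by
  simpa using (hasDerivAt_pow 2 x).const_sub 1

noncomputable def lamRingDeriv (U Vb W : ℝ → ℝ) (x : ℝ) : Matrix (Fin 2) (Fin 2) ℝ :=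
  let α := 2 * deriv U x - x / (1 - x ^ 2)
  let β := deriv Vb x + x / (1 - x ^ 2)
  !![exp (2 * U x + Vb x) * ((α + β) * cosh (W x) + deriv W x * sinh (W x)),
    exp (2 * U x) * √(1 - x ^ 2) * (α * sinh (W x) + deriv W x * cosh (W x));
    exp (2 * U x) * √(1 - x ^ 2) * (α * sinh (W x) + deriv W x * cosh (W x)),
    exp (2 * U x - Vb x) * (1 - x ^ 2) * ((α - β) * cosh (W x) + deriv W x * sinh (W x))]

section

variable {U Vb W : ℝ → ℝ} {x : ℝ}

theorem hasDerivAt_lamRing_apply (hU : DifferentiableAt ℝ U x) (hV : DifferentiableAt ℝ Vb x)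
    (hW : DifferentiableAt ℝ W x) (hx : 0 < 1 - x ^ 2) (i j : Fin 2) :
    HasDerivAt (fun t => lamRing U Vb W t i j) (lamRingDeriv U Vb W x i j) x := by
  have hU2 := hU.hasDerivAt.const_mul 2
  have hV := hV.hasDerivAt
  have hW := hW.hasDerivAt
  have hP := hasDerivAt_one_sub_sq x
  have hs : √(1 - x ^ 2) ≠ 0 := (sqrt_pos.2 hx).ne'
  have hoff : HasDerivAt (fun t => exp (2 * U t) * √(1 - t ^ 2) * sinh (W t))
      (lamRingDeriv U Vb W x 0 1) x :=
    ((hU2.exp.fun_mul (hP.sqrt hx.ne')).fun_mul hW.sinh).congr_deriv (by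
      simp [lamRingDeriv]
      field_simp
      rw [sq_sqrt hx.le]
      ring)
  fin_cases i <;> fin_cases j <;> simp [lamRing, lamRingDeriv]
  · exact ((hU2.fun_add hV).exp.fun_mul hW.cosh).congr_deriv (by ring)
  · exact hoff
  · exact hoff
  · exact (((hU2.fun_sub hV).exp.fun_mul hP).fun_mul hW.cosh).congr_deriv (by field_simp; ring)

theorem lamRing'_eq_lamRingDeriv (hU : DifferentiableAt ℝ U x) (hV : DifferentiableAt ℝ Vb x)
    (hW : DifferentiableAt ℝ W x) (hx : 0 < 1 - x ^ 2) :
    lamRing' U Vb W x = lamRingDeriv U Vb W x :=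
  Matrix.ext fun i j => (hasDerivAt_lamRing_apply hU hV hW hx i j).deriv

theorem det_lamRing (hx : 0 ≤ 1 - x ^ 2) :
    (lamRing U Vb W x).det = exp (2 * U x) ^ 2 * (1 - x ^ 2) := by
  rw [lamRing, Matrix.det_fin_two_of]
  linear_combination (1 - x ^ 2) * cosh (W x) ^ 2 * exp_add_mul_exp_sub (2 * U x) (Vb x)
    - exp (2 * U x) ^ 2 * sinh (W x) ^ 2 * sq_sqrt hx
    + exp (2 * U x) ^ 2 * (1 - x ^ 2) * cosh_sq_sub_sinh_sq (W x)

theorem hasDerivAt_det_lamRing (hU : DifferentiableAt ℝ U x) (hx : 0 < 1 - x ^ 2) :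
    HasDerivAt (fun t => (lamRing U Vb W t).det)
      (2 * (2 * deriv U x - x / (1 - x ^ 2)) * (exp (2 * U x) ^ 2 * (1 - x ^ 2))) x := by
  have hP := hasDerivAt_one_sub_sq x
  have hnear : ∀ᶠ t in nhds x, 0 ≤ 1 - t ^ 2 :=
    (hP.continuousAt.eventually (eventually_gt_nhds hx)).mono fun _ ht => ht.le
  refine ((((hU.hasDerivAt.const_mul 2).exp.fun_pow 2).fun_mul hP).congr_deriv ?_)
    |>.congr_of_eventuallyEq (hnear.mono fun t ht => det_lamRing ht)
  field_simp
  ring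

theorem det_lamRingDeriv (hx : 0 < 1 - x ^ 2) :
    (lamRingDeriv U Vb W x).det = exp (2 * U x) ^ 2 * (1 - x ^ 2) *
      ((2 * deriv U x - x / (1 - x ^ 2)) ^ 2 - (deriv Vb x + x / (1 - x ^ 2)) ^ 2 * cosh (W x) ^ 2
        - deriv W x ^ 2) := by
  simp only [lamRingDeriv, Matrix.det_fin_two_of]
  generalize 2 * deriv U x - x / (1 - x ^ 2) = α
  generalize deriv Vb x + x / (1 - x ^ 2) = β
  linear_combination (1 - x ^ 2) * ((α + β) * cosh (W x) + deriv W x * sinh (W x)) *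
      ((α - β) * cosh (W x) + deriv W x * sinh (W x)) * exp_add_mul_exp_sub (2 * U x) (Vb x)
    - exp (2 * U x) ^ 2 * (α * sinh (W x) + deriv W x * cosh (W x)) ^ 2 * sq_sqrt hx.le
    + exp (2 * U x) ^ 2 * (1 - x ^ 2) * (α ^ 2 - deriv W x ^ 2) * cosh_sq_sub_sinh_sq (W x)

end

/-- The kinetic-term identity of Section 6 for horizons of topology `S¹ × S²`, rewriting
the λ-part of the area functional in terms of the target variables `(U, V̄, W)`. -/
theorem stmt15 (U Vb W : ℝ → ℝ)
    (hU : ∀ x ∈ Set.Ioo (-1 : ℝ) 1, DifferentiableAt ℝ U x)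
    (hV : ∀ x ∈ Set.Ioo (-1 : ℝ) 1, DifferentiableAt ℝ Vb x)
    (hW : ∀ x ∈ Set.Ioo (-1 : ℝ) 1, DifferentiableAt ℝ W x) :
    ∀ x ∈ Set.Ioo (-1 : ℝ) 1,
      (1 - x ^ 2) *
          ((deriv (fun t => (lamRing U Vb W t).det) x) ^ 2 /
              (8 * ((lamRing U Vb W x).det) ^ 2) +
            1 / 8 * Matrix.trace (((lamRing U Vb W x)⁻¹ * lamRing' U Vb W x) ^ 2)) -
          1 / (1 - x ^ 2)
        = (1 - x ^ 2) / 4 *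
            (12 * (deriv U x) ^ 2 + (deriv Vb x) ^ 2 + (deriv W x) ^ 2 +
              Real.sinh (W x) ^ 2 * (deriv Vb x + x / (1 - x ^ 2)) ^ 2) +
          x / 2 * deriv (fun t => Vb t - 6 * U t) x - 1 := by
  intro x hx
  have hP : 0 < 1 - x ^ 2 := by nlinarith [hx.1, hx.2]
  have hUx := hU x hx
  have hVx := hV x hx
  have hdet := hasDerivAt_det_lamRing (Vb := Vb) (W := W) hUx hP
  have hjacobi := Matrix.hasDerivAt_det_fin_two (hasDerivAt_lamRing_apply hUx hVx (hW x hx) hP)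
  have hdet_ne : (lamRing U Vb W x).det ≠ 0 := by rw [det_lamRing hP.le]; positivity
  rw [lamRing'_eq_lamRingDeriv hUx hVx (hW x hx) hP, Matrix.trace_inv_mul_sq_fin_two hdet_ne,
    hjacobi.unique hdet, hdet.deriv, det_lamRingDeriv hP, det_lamRing hP.le,
    (hVx.hasDerivAt.fun_sub (hUx.hasDerivAt.const_mul 6)).deriv, cosh_sq]
  field_simp
  ring
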